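/- arXiv:2605.12983 — 6 statements merged into one kernel-verified Lean document; each statement's English description precedes it below -/
import Mathlib

section
/- For any bare tree T° over {0,1}^n, any function f : {0,1}^n → {−1,+1}, and any product distribution μ, the error of the f-completion of T° is bounded by its cost: error(T°, f) ≤ cost(T°), i.e. Σ_{v ∈ leaves(T°)} p_v · error(f_v, ±1) ≤ Σ_{v ∈ leaves(T°)} p_v · Inf(f_v). -/
open Classical

/-- Binary decision trees over inputs in `Fin n → Bool`, with leaf labels in `L`.
A *bare tree* is a `DTree n Unit`; a labeled decision tree is a `DTree n Bool`
(`true` encoding `+1` and `false` encoding `-1`). -/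
inductive DTree (n : ℕ) (L : Type) : Type
  | leaf (label : L) : DTree n L
  | node (i : Fin n) (t0 t1 : DTree n L) : DTree n L

namespace DTree

variable {n : ℕ} {L : Type}

/-- The sequence of branching directions taken by the input `x` (root-to-leaf path). -/
def follow : DTree n L → (Fin n → Bool) → List Bool
  | .leaf _, _ => []
  | .node i t0 t1, x => x i :: (if x i then follow t1 x else follow t0 x)

/-- Addresses (root-to-leaf direction sequences) of all leaves of the tree. -/
def leafAddrs : DTree n L → List (List Bool)
  | .leaf _ => [[]]
  | .node _ t0 t1 =>
      (leafAddrs t0).map (fun s => false :: s) ++ (leafAddrs t1).map (fun s => true :: s)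

/-- Addresses of all internal nodes, together with the coordinate queried there. -/
def internals : DTree n L → List (List Bool × Fin n)
  | .leaf _ => []
  | .node i t0 t1 =>
      ([], i) :: ((internals t0).map (fun vj => (false :: vj.1, vj.2)) ++
        (internals t1).map (fun vj => (true :: vj.1, vj.2)))

/-- Addresses of all nodes (internal nodes and leaves). -/
def allAddrs : DTree n L → List (List Bool)
  | .leaf _ => [[]]
  | .node _ t0 t1 =>
      [] :: ((allAddrs t0).map (fun s => false :: s) ++ (allAddrs t1).map (fun s => true :: s))

/-- The coordinates queried along the path with direction sequence `s`. -/
def pathCoords : DTree n L → List Bool → List (Fin n)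
  | .leaf _, _ => []
  | .node _ _ _, [] => []
  | .node i t0 t1, b :: bs => i :: (if b then pathCoords t1 bs else pathCoords t0 bs)

/-- The substitution that fixes each coordinate queried along the path `s`
to the corresponding direction value. -/
def pathSubst : DTree n L → List Bool → (Fin n → Bool) → (Fin n → Bool)
  | .leaf _, _, x => x
  | .node _ _ _, [], x => x
  | .node i t0 t1, b :: bs, x =>
      if b then pathSubst t1 bs (Function.update x i true)
      else pathSubst t0 bs (Function.update x i false)

/-- Depth: maximum leaf depth. -/
def depth : DTree n L → ℕ
  | .leaf _ => 0
  | .node _ t0 t1 => max (depth t0) (depth t1) + 1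

/-- Evaluation of a labeled tree: the label of the leaf reached by `x`. -/
def eval : DTree n L → (Fin n → Bool) → L
  | .leaf b, _ => b
  | .node i t0 t1, x => if x i then eval t1 x else eval t0 x

/-- Replace the leaf at address `s` by an internal node querying coordinate `i`
(whose two children are leaves). -/
def splitAt : DTree n L → List Bool → Fin n → DTree n L
  | .leaf l, [], i => .node i (.leaf l) (.leaf l)
  | .leaf l, _ :: _, _ => .leaf l
  | .node j t0 t1, [], _ => .node j t0 t1
  | .node j t0 t1, b :: bs, i =>
      if b then .node j t0 (splitAt t1 bs i) else .node j (splitAt t0 bs i) t1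

/-- No coordinate is queried more than once on any root-to-leaf path. -/
def noRepeat : DTree n L → Prop
  | .leaf _ => True
  | .node i t0 t1 =>
      i ∉ (internals t0).map Prod.snd ∧ i ∉ (internals t1).map Prod.snd ∧
        noRepeat t0 ∧ noRepeat t1

end DTree

/-- The probability mass of the point `x` under the product distribution on
`Fin n → Bool` in which coordinate `i` equals `true` with probability `p i`. -/
noncomputable def prMass {n : ℕ} (p : Fin n → ℝ) (x : Fin n → Bool) : ℝ :=
  ∏ i, if x i then p i else 1 - p i

open Classical in
/-- The probability of the event `E` under the product distribution with biases `p`. -/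
noncomputable def prEvent {n : ℕ} (p : Fin n → ℝ) (E : (Fin n → Bool) → Prop) : ℝ :=
  ∑ x : Fin n → Bool, if E x then prMass p x else 0

/-- The influence of coordinate `i` on `f` under the product distribution with biases `p`:
`Pr[f x ≠ f x⁽ⁱ⁾]` where `x⁽ⁱ⁾` re-randomizes the `i`-th coordinate of `x`. -/
noncomputable def infl {n : ℕ} (p : Fin n → ℝ) (i : Fin n) (f : (Fin n → Bool) → Bool) : ℝ :=
  ∑ x : Fin n → Bool, prMass p x *
    ((if f x ≠ f (Function.update x i true) then p i else 0) +
     (if f x ≠ f (Function.update x i false) then 1 - p i else 0))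

/-- Total influence: the sum of the coordinate influences. -/
noncomputable def totalInf {n : ℕ} (p : Fin n → ℝ) (f : (Fin n → Bool) → Bool) : ℝ :=
  ∑ i, infl p i f

/-- Maximum coordinate influence. -/
noncomputable def maxInf {n : ℕ} (p : Fin n → ℝ) (f : (Fin n → Bool) → Bool) : ℝ :=
  ⨆ i : Fin n, infl p i f

/-- Expectation of the `±1` value of `f` (with `true ↦ 1`, `false ↦ -1`). -/
noncomputable def expVal {n : ℕ} (p : Fin n → ℝ) (f : (Fin n → Bool) → Bool) : ℝ :=
  ∑ x : Fin n → Bool, prMass p x * (if f x then 1 else -1)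

/-- Variance of the `±1`-valued function `f`: `1 - E[f]²`. -/
noncomputable def varOf {n : ℕ} (p : Fin n → ℝ) (f : (Fin n → Bool) → Bool) : ℝ :=
  1 - (expVal p f) ^ 2

/-- `error(f, ±1)`: the minority-value probability of `f`. -/
noncomputable def errOf {n : ℕ} (p : Fin n → ℝ) (f : (Fin n → Bool) → Bool) : ℝ :=
  min (prEvent p (fun x => f x = false)) (prEvent p (fun x => f x = true))

/-- `p_v` for a leaf `v` with address `s`: the probability that a random input reaches it. -/
noncomputable def reachLeaf {n : ℕ} {L : Type} (p : Fin n → ℝ) (T : DTree n L)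
    (s : List Bool) : ℝ :=
  prEvent p (fun x => T.follow x = s)

/-- `p_v` for an arbitrary node `v` with address `s`. -/
noncomputable def reachNode {n : ℕ} {L : Type} (p : Fin n → ℝ) (T : DTree n L)
    (s : List Bool) : ℝ :=
  prEvent p (fun x => s <+: T.follow x)

/-- The subfunction `f_v` at the node of `T` with address `s`: `f` with the
coordinates queried on the path to `v` fixed to their path values. -/
def subFun {n : ℕ} {L : Type} (f : (Fin n → Bool) → Bool) (T : DTree n L)
    (s : List Bool) : (Fin n → Bool) → Bool :=
  fun x => f (T.pathSubst s x)

/-- Average depth `Δ(T) = Σ_{leaves v} p_v · depth(v)`. -/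
noncomputable def avgDepth {n : ℕ} {L : Type} (p : Fin n → ℝ) (T : DTree n L) : ℝ :=
  ((T.leafAddrs).map (fun s => reachLeaf p T s * (s.length : ℝ))).sum

/-- `Score(v) = p_v · max_i Inf_i(f_v)` for a leaf `v` with address `s`. -/
noncomputable def score {n : ℕ} {L : Type} (p : Fin n → ℝ) (f : (Fin n → Bool) → Bool)
    (T : DTree n L) (s : List Bool) : ℝ :=
  reachLeaf p T s * maxInf p (subFun f T s)

/-- `cost(T°) = Σ_{leaves v} p_v · Inf(f_v)`. -/
noncomputable def cost {n : ℕ} {L : Type} (p : Fin n → ℝ) (f : (Fin n → Bool) → Bool)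
    (T : DTree n L) : ℝ :=
  ((T.leafAddrs).map (fun s => reachLeaf p T s * totalInf p (subFun f T s))).sum

/-- The error of the `f`-completion of a bare tree:
`error(T°, f) = Σ_{leaves v} p_v · error(f_v, ±1)`. -/
noncomputable def errTree {n : ℕ} {L : Type} (p : Fin n → ℝ) (f : (Fin n → Bool) → Bool)
    (T : DTree n L) : ℝ :=
  ((T.leafAddrs).map (fun s => reachLeaf p T s * errOf p (subFun f T s))).sum

section Aux

lemma prMass_nonneg {n : ℕ} {p : Fin n → ℝ} (hp : ∀ i, 0 ≤ p i ∧ p i ≤ 1)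
    (x : Fin n → Bool) : 0 ≤ prMass p x :=
  Finset.prod_nonneg fun i _ => by
    by_cases h : x i <;> simp [h, (hp i).1, sub_nonneg.mpr (hp i).2]

lemma prEvent_nonneg {n : ℕ} {p : Fin n → ℝ} (hp : ∀ i, 0 ≤ p i ∧ p i ≤ 1)
    (E : (Fin n → Bool) → Prop) : 0 ≤ prEvent p E :=
  Finset.sum_nonneg fun x _ => by
    by_cases h : E x <;> simp [h, prMass_nonneg hp x]

lemma prEvent_le_add {n : ℕ} {p : Fin n → ℝ} (hp : ∀ i, 0 ≤ p i ∧ p i ≤ 1)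
    {A B C : (Fin n → Bool) → Prop} (h : ∀ x, A x → B x ∨ C x) :
    prEvent p A ≤ prEvent p B + prEvent p C := by
  unfold prEvent
  rw [← Finset.sum_add_distrib]
  refine Finset.sum_le_sum fun x _ => ?_
  have hm := prMass_nonneg hp x
  by_cases hA : A x
  · rcases h x hA with hB | hC
    · by_cases hC' : C x <;> simp [hA, hB, hC'] <;> linarith
    · by_cases hB' : B x <;> simp [hA, hB', hC] <;> linarith
  · by_cases hB : B x <;> by_cases hC : C x <;> simp [hA, hB, hC] <;> linarith

lemma sum_cons_split {n : ℕ} (F : (Fin (n + 1) → Bool) → ℝ) :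
    ∑ x : Fin (n + 1) → Bool, F x
      = ∑ y : Fin n → Bool, (F (Fin.cons false y) + F (Fin.cons true y)) := by
  rw [← Equiv.sum_comp (Fin.consEquiv (fun _ => Bool)) F, Fintype.sum_prod_type,
    Fintype.sum_bool, ← Finset.sum_add_distrib]
  refine Finset.sum_congr rfl fun y _ => ?_
  exact add_comm _ _

lemma prMass_cons {n : ℕ} (p : Fin (n + 1) → ℝ) (b : Bool) (y : Fin n → Bool) :
    prMass p (Fin.cons b y)
      = (if b then p 0 else 1 - p 0) * prMass (fun i => p i.succ) y := by
  unfold prMass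
  rw [Fin.prod_univ_succ]
  simp [Fin.cons_zero, Fin.cons_succ]

lemma prEvent_cons {n : ℕ} (p : Fin (n + 1) → ℝ) (E : (Fin (n + 1) → Bool) → Prop) :
    prEvent p E
      = (1 - p 0) * prEvent (fun i => p i.succ) (fun y => E (Fin.cons false y))
        + p 0 * prEvent (fun i => p i.succ) (fun y => E (Fin.cons true y)) := by
  unfold prEvent
  rw [sum_cons_split, Finset.sum_add_distrib, Finset.mul_sum, Finset.mul_sum]
  congr 1
  · refine Finset.sum_congr rfl fun y _ => ?_
    by_cases h : E (Fin.cons false y) <;> simp [h, prMass_cons]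
  · refine Finset.sum_congr rfl fun y _ => ?_
    by_cases h : E (Fin.cons true y) <;> simp [h, prMass_cons]

lemma infl_succ {n : ℕ} (p : Fin (n + 1) → ℝ) (i : Fin n)
    (f : (Fin (n + 1) → Bool) → Bool) :
    infl p i.succ f
      = (1 - p 0) * infl (fun j => p j.succ) i (fun y => f (Fin.cons false y))
        + p 0 * infl (fun j => p j.succ) i (fun y => f (Fin.cons true y)) := by
  unfold infl
  rw [sum_cons_split, Finset.sum_add_distrib, Finset.mul_sum, Finset.mul_sum]
  congr 1
  · refine Finset.sum_congr rfl fun y _ => ?_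
    rw [prMass_cons, ← Fin.cons_update, ← Fin.cons_update]
    norm_num [mul_assoc]
  · refine Finset.sum_congr rfl fun y _ => ?_
    rw [prMass_cons, ← Fin.cons_update, ← Fin.cons_update]
    norm_num [mul_assoc]

lemma infl_zero {n : ℕ} (p : Fin (n + 1) → ℝ) (f : (Fin (n + 1) → Bool) → Bool) :
    infl p 0 f = 2 * (1 - p 0) * p 0 *
      prEvent (fun j => p j.succ)
        (fun y => f (Fin.cons false y) ≠ f (Fin.cons true y)) := by
  unfold infl prEvent
  rw [sum_cons_split, Finset.mul_sum]
  refine Finset.sum_congr rfl fun y _ => ?_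
  rw [prMass_cons, prMass_cons]
  simp only [Fin.update_cons_zero]
  by_cases h : f (Fin.cons false y) = f (Fin.cons true y)
  · simp [h]
  · have h' : f (Fin.cons true y) ≠ f (Fin.cons false y) := fun e => h e.symm
    simp only [ne_eq, h, not_false_eq_true, if_true, h', not_true_eq_false, if_false,
      if_pos, not_not]
    simp [h, h']
    ring

lemma totalInf_succ {n : ℕ} (p : Fin (n + 1) → ℝ) (f : (Fin (n + 1) → Bool) → Bool) :
    totalInf p f
      = 2 * (1 - p 0) * p 0 *
          prEvent (fun j => p j.succ)
            (fun y => f (Fin.cons false y) ≠ f (Fin.cons true y))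
        + (1 - p 0) * totalInf (fun j => p j.succ) (fun y => f (Fin.cons false y))
        + p 0 * totalInf (fun j => p j.succ) (fun y => f (Fin.cons true y)) := by
  unfold totalInf
  rw [Fin.sum_univ_succ, infl_zero]
  simp_rw [infl_succ]
  rw [Finset.sum_add_distrib, ← Finset.mul_sum, ← Finset.mul_sum]
  ring

lemma min_mix {s t q0 q1 r0 r1 D : ℝ} (hs : 0 ≤ s) (ht : 0 ≤ t) (hst : s + t = 1)
    (h1 : q1 ≤ q0 + D) (h2 : q0 ≤ q1 + D) (h3 : r1 ≤ r0 + D) (h4 : r0 ≤ r1 + D) :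
    min (s * q0 + t * q1) (s * r0 + t * r1)
      ≤ s * min q0 r0 + t * min q1 r1 + 2 * s * t * D := by
  have hD : 0 ≤ D := by linarith
  have hst' : 0 ≤ s * t := mul_nonneg hs ht
  have hDts : 0 ≤ 2 * s * t * D := by nlinarith
  rcases le_total q0 r0 with h5 | h5 <;> rcases le_total q1 r1 with h6 | h6
  · rw [min_eq_left h5, min_eq_left h6]
    refine le_trans (min_le_left _ _) ?_
    linarith
  · rw [min_eq_left h5, min_eq_right h6]
    rcases le_total (t * (q1 - r1)) (s * (r0 - q0)) with h7 | h7
    · refine le_trans (min_le_left _ _) ?_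
      have e : t * (q1 - r1) = s * (t * (q1 - r1)) + t * (t * (q1 - r1)) := by
        rw [← add_mul, hst, one_mul]
      have e2 : t * (t * (q1 - r1)) ≤ t * (s * (r0 - q0)) :=
        mul_le_mul_of_nonneg_left h7 ht
      have e3 : 0 ≤ s * t * (2 * D - ((q1 - r1) + (r0 - q0))) :=
        mul_nonneg hst' (by linarith)
      nlinarith [e, e2, e3]
    · refine le_trans (min_le_right _ _) ?_
      have e : s * (r0 - q0) = s * (s * (r0 - q0)) + t * (s * (r0 - q0)) := by
        rw [← add_mul, hst, one_mul]
      have e2 : s * (s * (r0 - q0)) ≤ s * (t * (q1 - r1)) :=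
        mul_le_mul_of_nonneg_left h7 hs
      have e3 : 0 ≤ s * t * (2 * D - ((q1 - r1) + (r0 - q0))) :=
        mul_nonneg hst' (by linarith)
      nlinarith [e, e2, e3]
  · rw [min_eq_right h5, min_eq_left h6]
    rcases le_total (t * (r1 - q1)) (s * (q0 - r0)) with h7 | h7
    · refine le_trans (min_le_right _ _) ?_
      have e : t * (r1 - q1) = s * (t * (r1 - q1)) + t * (t * (r1 - q1)) := by
        rw [← add_mul, hst, one_mul]
      have e2 : t * (t * (r1 - q1)) ≤ t * (s * (q0 - r0)) :=
        mul_le_mul_of_nonneg_left h7 ht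
      have e3 : 0 ≤ s * t * (2 * D - ((r1 - q1) + (q0 - r0))) :=
        mul_nonneg hst' (by linarith)
      nlinarith [e, e2, e3]
    · refine le_trans (min_le_left _ _) ?_
      have e : s * (q0 - r0) = s * (s * (q0 - r0)) + t * (s * (q0 - r0)) := by
        rw [← add_mul, hst, one_mul]
      have e2 : s * (s * (q0 - r0)) ≤ s * (t * (r1 - q1)) :=
        mul_le_mul_of_nonneg_left h7 hs
      have e3 : 0 ≤ s * t * (2 * D - ((r1 - q1) + (q0 - r0))) :=
        mul_nonneg hst' (by linarith)
      nlinarith [e, e2, e3]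
  · rw [min_eq_right h5, min_eq_right h6]
    refine le_trans (min_le_right _ _) ?_
    linarith

lemma errOf_le_totalInf : ∀ {n : ℕ} (p : Fin n → ℝ), (∀ i, 0 ≤ p i ∧ p i ≤ 1) →
    ∀ f : (Fin n → Bool) → Bool, errOf p f ≤ totalInf p f := by
  intro n
  induction n with
  | zero =>
    intro p hp f
    have h0 : totalInf p f = 0 := by simp [totalInf]
    have hx : ∀ x : Fin 0 → Bool, f x = f (fun i => i.elim0) :=
      fun x => congrArg f (funext fun i => i.elim0)
    rw [h0, errOf]
    cases h : f (fun i : Fin 0 => i.elim0) with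
    | false =>
      have hz : prEvent p (fun x => f x = true) = 0 :=
        Finset.sum_eq_zero fun x _ => if_neg (fun e => by
          have e' : f x = true := e
          rw [hx x, h] at e'
          exact Bool.noConfusion e')
      exact le_trans (min_le_right _ _) (le_of_eq hz)
    | true =>
      have hz : prEvent p (fun x => f x = false) = 0 :=
        Finset.sum_eq_zero fun x _ => if_neg (fun e => by
          have e' : f x = false := e
          rw [hx x, h] at e'
          exact Bool.noConfusion e')
      exact le_trans (min_le_left _ _) (le_of_eq hz)
  | succ n ih =>
    intro p hp f
    set p' : Fin n → ℝ := fun i => p i.succ with hp'def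
    have hp' : ∀ i, 0 ≤ p' i ∧ p' i ≤ 1 := fun i => hp i.succ
    set g0 : (Fin n → Bool) → Bool := fun y => f (Fin.cons false y) with hg0
    set g1 : (Fin n → Bool) → Bool := fun y => f (Fin.cons true y) with hg1
    set D := prEvent p' (fun y => g0 y ≠ g1 y) with hD
    set q0 := prEvent p' (fun y => g0 y = false) with hq0
    set q1 := prEvent p' (fun y => g1 y = false) with hq1
    set r0 := prEvent p' (fun y => g0 y = true) with hr0
    set r1 := prEvent p' (fun y => g1 y = true) with hr1
    have hbq1 : q1 ≤ q0 + D := by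
      refine prEvent_le_add hp' fun y hy => ?_
      by_cases h : g0 y = false
      · exact Or.inl h
      · exact Or.inr fun e => h (e.trans hy)
    have hbq0 : q0 ≤ q1 + D := by
      refine prEvent_le_add hp' fun y hy => ?_
      by_cases h : g1 y = false
      · exact Or.inl h
      · exact Or.inr fun e => h (e.symm.trans hy)
    have hbr1 : r1 ≤ r0 + D := by
      refine prEvent_le_add hp' fun y hy => ?_
      by_cases h : g0 y = true
      · exact Or.inl h
      · exact Or.inr fun e => h (e.trans hy)
    have hbr0 : r0 ≤ r1 + D := by
      refine prEvent_le_add hp' fun y hy => ?_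
      by_cases h : g1 y = true
      · exact Or.inl h
      · exact Or.inr fun e => h (e.symm.trans hy)
    have hs : (0 : ℝ) ≤ 1 - p 0 := sub_nonneg.mpr (hp 0).2
    have ht : (0 : ℝ) ≤ p 0 := (hp 0).1
    have hq : prEvent p (fun x => f x = false) = (1 - p 0) * q0 + p 0 * q1 :=
      prEvent_cons p _
    have hr : prEvent p (fun x => f x = true) = (1 - p 0) * r0 + p 0 * r1 :=
      prEvent_cons p _
    have hmix :
        errOf p f ≤ (1 - p 0) * min q0 r0 + p 0 * min q1 r1 + 2 * (1 - p 0) * p 0 * D := by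
      rw [errOf, hq, hr]
      exact min_mix hs ht (by ring) hbq1 hbq0 hbr1 hbr0
    have hIH0 : errOf p' g0 ≤ totalInf p' g0 := ih p' hp' g0
    have hIH1 : errOf p' g1 ≤ totalInf p' g1 := ih p' hp' g1
    have htot : totalInf p f
        = 2 * (1 - p 0) * p 0 * D + (1 - p 0) * totalInf p' g0 + p 0 * totalInf p' g1 :=
      totalInf_succ p f
    have he0 : errOf p' g0 = min q0 r0 := rfl
    have he1 : errOf p' g1 = min q1 r1 := rfl
    rw [htot]
    rw [he0] at hIH0
    rw [he1] at hIH1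
    have hD0 : 0 ≤ D := prEvent_nonneg hp' _
    nlinarith [mul_le_mul_of_nonneg_left hIH0 hs, mul_le_mul_of_nonneg_left hIH1 ht]

end Aux

/-- For any bare tree `T°`, any `f` and any product distribution,
the error of the `f`-completion of `T°` is at most its cost:
`Σ_{leaves v} p_v · error(f_v, ±1) ≤ Σ_{leaves v} p_v · Inf(f_v)`. -/
theorem errTree_le_cost {n : ℕ} (p : Fin n → ℝ)
    (hp : ∀ i, 0 ≤ p i ∧ p i ≤ 1)
    (f : (Fin n → Bool) → Bool) (T : DTree n Unit) :
    errTree p f T ≤ cost p f T := by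
  unfold errTree cost
  refine List.sum_le_sum fun s _ => ?_
  exact mul_le_mul_of_nonneg_left (errOf_le_totalInf p hp _) (prEvent_nonneg hp _)
end

section
/- If f : {0,1}^n → {−1,+1} is computed by a decision tree T under a product distribution μ, then the total influence of f satisfies Inf(f) ≤ D(T) · Var(f), where D(T) is the depth of T. -/
open Classical

/-! ### Auxiliary development for Statement 4 -/

namespace InfDepthVar

open Finset Function

variable {n : ℕ}

lemma prMass_nonneg {p : Fin n → ℝ} (hp : ∀ i, 0 ≤ p i ∧ p i ≤ 1) (x : Fin n → Bool) :
    0 ≤ prMass p x := by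
  apply Finset.prod_nonneg
  intro i _
  by_cases h : x i <;> simp [h] <;> linarith [(hp i).1, (hp i).2]

lemma sum_prMass (p : Fin n → ℝ) : ∑ x : Fin n → Bool, prMass p x = 1 := by
  have h := Finset.prod_univ_sum (fun _ : Fin n => (Finset.univ : Finset Bool))
    (fun i b => if b then p i else 1 - p i)
  rw [Fintype.piFinset_univ] at h
  unfold prMass
  rw [← h]
  simp

lemma prMass_eq (p : Fin n → ℝ) (x : Fin n → Bool) (i : Fin n) :
    prMass p x = (if x i then p i else 1 - p i) *
      ∏ j ∈ Finset.univ.erase i, (if x j then p j else 1 - p j) := by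
  rw [prMass, ← Finset.mul_prod_erase Finset.univ _ (Finset.mem_univ i)]

lemma prMass_update (p : Fin n → ℝ) (x : Fin n → Bool) (i : Fin n) (b : Bool) :
    prMass p (Function.update x i b) = (if b then p i else 1 - p i) *
      ∏ j ∈ Finset.univ.erase i, (if x j then p j else 1 - p j) := by
  rw [prMass_eq p _ i, Function.update_self]
  congr 1
  apply Finset.prod_congr rfl
  intro j hj
  rw [Function.update_of_ne (Finset.ne_of_mem_erase hj)]

lemma condExp (p : Fin n → ℝ) (i : Fin n) (F : (Fin n → Bool) → ℝ) :
    ∑ x : Fin n → Bool, prMass p x * F x =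
      ∑ x : Fin n → Bool, prMass p x *
        (p i * F (Function.update x i true) + (1 - p i) * F (Function.update x i false)) := by
  have hinv : Function.Involutive (fun y : Fin n → Bool => Function.update y i (!y i)) := by
    intro y
    funext j
    by_cases h : j = i
    · subst h; simp
    · simp [Function.update_of_ne h]
  let σ : Equiv.Perm (Fin n → Bool) :=
    ⟨fun y => Function.update y i (!y i), fun y => Function.update y i (!y i), hinv, hinv⟩
  set d : (Fin n → Bool) → ℝ := fun x => prMass p x * F x - prMass p x *
    (p i * F (Function.update x i true) + (1 - p i) * F (Function.update x i false)) with hd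
  have key : ∀ x, d x + d (σ x) = 0 := by
    intro x
    have hσ : σ x = Function.update x i (!x i) := rfl
    cases hxi : x i
    · have h1 : Function.update x i false = x := by
        conv_lhs => rw [← hxi]
        rw [Function.update_eq_self]
      simp only [hd, hσ, hxi, Bool.not_false]
      rw [Function.update_idem, Function.update_idem, prMass_update p x i true,
        prMass_eq p x i, hxi, h1]
      simp only [if_true, Bool.false_eq_true, if_false]
      ring
    · have h1 : Function.update x i true = x := by
        conv_lhs => rw [← hxi]
        rw [Function.update_eq_self]
      simp only [hd, hσ, hxi, Bool.not_true]
      rw [Function.update_idem, Function.update_idem, prMass_update p x i false,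
        prMass_eq p x i, hxi, h1]
      simp only [if_true, Bool.false_eq_true, if_false]
      ring
  have h2 : ∑ x : Fin n → Bool, d (σ x) = ∑ x : Fin n → Bool, d x := Equiv.sum_comp σ d
  have h3 : ∑ x : Fin n → Bool, d x = 0 := by
    have h4 : (∑ x : Fin n → Bool, d x) + ∑ x : Fin n → Bool, d x = 0 := by
      nth_rewrite 1 [← h2]
      rw [← Finset.sum_add_distrib]
      exact Finset.sum_eq_zero fun x _ => by rw [add_comm]; exact key x
    linarith
  have h5 : (∑ x : Fin n → Bool, prMass p x * F x) -
      ∑ x : Fin n → Bool, prMass p x *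
        (p i * F (Function.update x i true) + (1 - p i) * F (Function.update x i false)) = 0 := by
    rw [← Finset.sum_sub_distrib]
    exact h3
  linarith

section Split

variable {p : Fin n → ℝ} {i : Fin n} {f f1 f0 : (Fin n → Bool) → Bool}
  (hp : ∀ i, 0 ≤ p i ∧ p i ≤ 1)
  (h1 : ∀ x b, f1 (Function.update x i b) = f1 x)
  (h0 : ∀ x b, f0 (Function.update x i b) = f0 x)
  (hsplit : ∀ x, f x = if x i then f1 x else f0 x)

include h1 hsplit in
lemma f_up_t : ∀ x, f (Function.update x i true) = f1 x := by
  intro x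
  rw [hsplit]
  simp [h1]

include h0 hsplit in
lemma f_up_f : ∀ x, f (Function.update x i false) = f0 x := by
  intro x
  rw [hsplit]
  simp [h0]

include h1 h0 hsplit in
lemma expVal_split : expVal p f = p i * expVal p f1 + (1 - p i) * expVal p f0 := by
  have key := condExp p i (fun y => if f y then (1:ℝ) else -1)
  unfold expVal
  rw [key, Finset.mul_sum, Finset.mul_sum, ← Finset.sum_add_distrib]
  apply Finset.sum_congr rfl
  intro x _
  rw [f_up_t h1 hsplit x, f_up_f h0 hsplit x]
  ring

include h1 h0 hsplit in
lemma infl_split {j : Fin n} (hij : j ≠ i) :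
    infl p j f = p i * infl p j f1 + (1 - p i) * infl p j f0 := by
  have key := condExp p i (fun y =>
    (if f y ≠ f (Function.update y j true) then p j else 0) +
    (if f y ≠ f (Function.update y j false) then 1 - p j else 0))
  unfold infl
  rw [key, Finset.mul_sum, Finset.mul_sum, ← Finset.sum_add_distrib]
  apply Finset.sum_congr rfl
  intro x _
  have e1 : ∀ c : Bool, f (Function.update (Function.update x i true) j c)
      = f1 (Function.update x j c) := by
    intro c
    rw [Function.update_comm (Ne.symm hij)]
    exact f_up_t h1 hsplit _
  have e0 : ∀ c : Bool, f (Function.update (Function.update x i false) j c)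
      = f0 (Function.update x j c) := by
    intro c
    rw [Function.update_comm (Ne.symm hij)]
    exact f_up_f h0 hsplit _
  rw [f_up_t h1 hsplit x, f_up_f h0 hsplit x, e1, e1, e0, e0]
  ring

include h1 h0 hsplit in
lemma infl_self : infl p i f =
    2 * (p i * ((1 - p i) *
      ∑ x : Fin n → Bool, prMass p x * (if f1 x = f0 x then 0 else 1))) := by
  have key := condExp p i (fun y =>
    (if f y ≠ f (Function.update y i true) then p i else 0) +
    (if f y ≠ f (Function.update y i false) then 1 - p i else 0))
  unfold infl
  rw [key]
  rw [Finset.mul_sum, Finset.mul_sum, Finset.mul_sum]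
  apply Finset.sum_congr rfl
  intro x _
  rw [Function.update_idem, Function.update_idem, Function.update_idem, Function.update_idem,
    f_up_t h1 hsplit x, f_up_f h0 hsplit x]
  by_cases hD : f1 x = f0 x
  · simp [hD]
  · simp only [ne_eq, hD, not_true_eq_false, not_false_eq_true, if_true, if_false,
      Ne.symm hD, if_neg]
    ring

lemma infl_indep {g : (Fin n → Bool) → Bool} (hg : ∀ x b, g (Function.update x i b) = g x) :
    infl p i g = 0 := by
  unfold infl
  apply Finset.sum_eq_zero
  intro x _
  simp [hg]

include h1 h0 hsplit in
lemma totalInf_split : totalInf p f =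
    p i * totalInf p f1 + (1 - p i) * totalInf p f0 + infl p i f := by
  unfold totalInf
  rw [← Finset.add_sum_erase _ _ (Finset.mem_univ i),
    ← Finset.add_sum_erase _ (fun j => infl p j f1) (Finset.mem_univ i),
    ← Finset.add_sum_erase _ (fun j => infl p j f0) (Finset.mem_univ i)]
  rw [infl_indep h1, infl_indep h0]
  have hsum : ∑ j ∈ Finset.univ.erase i, infl p j f =
      ∑ j ∈ Finset.univ.erase i, (p i * infl p j f1 + (1 - p i) * infl p j f0) := by
    apply Finset.sum_congr rfl
    intro j hj
    exact infl_split h1 h0 hsplit (Finset.ne_of_mem_erase hj)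
  rw [hsum, Finset.sum_add_distrib, ← Finset.mul_sum, ← Finset.mul_sum]
  ring

end Split

section Var

variable {p : Fin n → ℝ}

lemma expVal_le_one (hp : ∀ i, 0 ≤ p i ∧ p i ≤ 1) (f : (Fin n → Bool) → Bool) :
    expVal p f ≤ 1 := by
  rw [show (1:ℝ) = ∑ x : Fin n → Bool, prMass p x from (sum_prMass p).symm]
  unfold expVal
  apply Finset.sum_le_sum
  intro x _
  have := prMass_nonneg hp x
  split_ifs <;> nlinarith

lemma neg_one_le_expVal (hp : ∀ i, 0 ≤ p i ∧ p i ≤ 1) (f : (Fin n → Bool) → Bool) :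
    -1 ≤ expVal p f := by
  rw [show (-1:ℝ) = -∑ x : Fin n → Bool, prMass p x from by rw [sum_prMass p]]
  rw [← Finset.sum_neg_distrib]
  unfold expVal
  apply Finset.sum_le_sum
  intro x _
  have := prMass_nonneg hp x
  split_ifs <;> nlinarith

lemma expVal_sq_le_one (hp : ∀ i, 0 ≤ p i ∧ p i ≤ 1) (f : (Fin n → Bool) → Bool) :
    expVal p f ^ 2 ≤ 1 := by
  have ha := expVal_le_one hp f
  have hb := neg_one_le_expVal hp f
  nlinarith

lemma varOf_nonneg (hp : ∀ i, 0 ≤ p i ∧ p i ≤ 1) (f : (Fin n → Bool) → Bool) :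
    0 ≤ varOf p f := by
  have := expVal_sq_le_one hp f
  unfold varOf
  linarith

lemma eps_nonneg (hp : ∀ i, 0 ≤ p i ∧ p i ≤ 1) (f1 f0 : (Fin n → Bool) → Bool) :
    0 ≤ ∑ x : Fin n → Bool, prMass p x * (if f1 x = f0 x then 0 else 1) := by
  apply Finset.sum_nonneg
  intro x _
  have := prMass_nonneg hp x
  split_ifs <;> nlinarith

lemma prod_exp_le (hp : ∀ i, 0 ≤ p i ∧ p i ≤ 1) (f1 f0 : (Fin n → Bool) → Bool) :
    expVal p f1 * expVal p f0 ≤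
      1 - ∑ x : Fin n → Bool, prMass p x * (if f1 x = f0 x then 0 else 1) := by
  classical
  set u : ℝ := ∑ x : Fin n → Bool, prMass p x * (if f1 x = true ∧ f0 x = true then 1 else 0) with hu
  set v : ℝ := ∑ x : Fin n → Bool, prMass p x * (if f1 x = true ∧ f0 x = false then 1 else 0) with hv
  set w : ℝ := ∑ x : Fin n → Bool, prMass p x * (if f1 x = false ∧ f0 x = true then 1 else 0) with hw
  set z : ℝ := ∑ x : Fin n → Bool, prMass p x * (if f1 x = false ∧ f0 x = false then 1 else 0) with hz
  have hnn : ∀ (g : (Fin n → Bool) → ℝ), (∀ x, 0 ≤ g x) →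
      0 ≤ ∑ x : Fin n → Bool, prMass p x * g x := by
    intro g hg
    apply Finset.sum_nonneg
    intro x _
    exact mul_nonneg (prMass_nonneg hp x) (hg x)
  have hu' : 0 ≤ u := by
    rw [hu]; exact hnn _ (fun x => by split_ifs <;> norm_num)
  have hv' : 0 ≤ v := by
    rw [hv]; exact hnn _ (fun x => by split_ifs <;> norm_num)
  have hw' : 0 ≤ w := by
    rw [hw]; exact hnn _ (fun x => by split_ifs <;> norm_num)
  have hz' : 0 ≤ z := by
    rw [hz]; exact hnn _ (fun x => by split_ifs <;> norm_num)
  have hsum : u + v + w + z = 1 := by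
    have hh : u + v + w + z = ∑ x : Fin n → Bool, prMass p x := by
      rw [hu, hv, hw, hz, ← Finset.sum_add_distrib, ← Finset.sum_add_distrib,
        ← Finset.sum_add_distrib]
      apply Finset.sum_congr rfl
      intro x _
      cases hx1 : f1 x <;> cases hx0 : f0 x <;> simp [hx1, hx0]
    rw [hh, sum_prMass]
  have ha : expVal p f1 = u + v - w - z := by
    rw [hu, hv, hw, hz, ← Finset.sum_add_distrib, ← Finset.sum_sub_distrib,
      ← Finset.sum_sub_distrib]
    unfold expVal
    apply Finset.sum_congr rfl
    intro x _
    cases hx1 : f1 x <;> cases hx0 : f0 x <;> simp [hx1, hx0]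
  have hb : expVal p f0 = u - v + w - z := by
    rw [hu, hv, hw, hz, ← Finset.sum_sub_distrib, ← Finset.sum_add_distrib,
      ← Finset.sum_sub_distrib]
    unfold expVal
    apply Finset.sum_congr rfl
    intro x _
    cases hx1 : f1 x <;> cases hx0 : f0 x <;> simp [hx1, hx0]
  have he : ∑ x : Fin n → Bool, prMass p x * (if f1 x = f0 x then 0 else 1) = v + w := by
    rw [hv, hw, ← Finset.sum_add_distrib]
    apply Finset.sum_congr rfl
    intro x _
    cases hx1 : f1 x <;> cases hx0 : f0 x <;> simp [hx1, hx0]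
  rw [ha, hb, he]
  have hgoal : (u + v - w - z) * (u - v + w - z) ≤ u + z := by
    nlinarith [sq_nonneg (v - w), mul_nonneg hu' hz',
      mul_nonneg (add_nonneg hu' hz') (add_nonneg hv' hw'), hsum]
  linarith

lemma var_split_ge (hp : ∀ i, 0 ≤ p i ∧ p i ≤ 1) {i : Fin n} {f f1 f0 : (Fin n → Bool) → Bool}
    (h1 : ∀ x b, f1 (Function.update x i b) = f1 x)
    (h0 : ∀ x b, f0 (Function.update x i b) = f0 x)
    (hsplit : ∀ x, f x = if x i then f1 x else f0 x) :
    p i * varOf p f1 + (1 - p i) * varOf p f0 ≤ varOf p f := by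
  have hE := expVal_split (p := p) h1 h0 hsplit
  have hq := (hp i).1
  have hq' := (hp i).2
  have ha2 := expVal_sq_le_one hp f1
  have hb2 := expVal_sq_le_one hp f0
  unfold varOf
  rw [hE]
  nlinarith [mul_nonneg (mul_nonneg hq (by linarith : (0:ℝ) ≤ 1 - p i))
    (sq_nonneg (expVal p f1 - expVal p f0))]

lemma var_ge_infl (hp : ∀ i, 0 ≤ p i ∧ p i ≤ 1) {i : Fin n} {f f1 f0 : (Fin n → Bool) → Bool}
    (h1 : ∀ x b, f1 (Function.update x i b) = f1 x)
    (h0 : ∀ x b, f0 (Function.update x i b) = f0 x)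
    (hsplit : ∀ x, f x = if x i then f1 x else f0 x) :
    infl p i f ≤ varOf p f := by
  have hE := expVal_split (p := p) h1 h0 hsplit
  have hI := infl_self (p := p) h1 h0 hsplit
  set ε : ℝ := ∑ x : Fin n → Bool, prMass p x * (if f1 x = f0 x then 0 else 1) with hε
  have hε0 : 0 ≤ ε := eps_nonneg hp f1 f0
  have hab : expVal p f1 * expVal p f0 ≤ 1 - ε := prod_exp_le hp f1 f0
  have hq := (hp i).1
  have hq' := (hp i).2
  have ha2 := expVal_sq_le_one hp f1
  have hb2 := expVal_sq_le_one hp f0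
  unfold varOf
  rw [hE, hI]
  nlinarith [mul_nonneg (sq_nonneg (p i)) (by linarith : (0:ℝ) ≤ 1 - expVal p f1 ^ 2),
    mul_nonneg (sq_nonneg (1 - p i)) (by linarith : (0:ℝ) ≤ 1 - expVal p f0 ^ 2),
    mul_nonneg (mul_nonneg hq (by linarith : (0:ℝ) ≤ 1 - p i))
      (by linarith : (0:ℝ) ≤ 1 - expVal p f1 * expVal p f0 - ε)]

lemma totalInf_const {f : (Fin n → Bool) → Bool} (c : Bool) (hc : ∀ x, f x = c) :
    totalInf p f = 0 := by
  unfold totalInf infl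
  apply Finset.sum_eq_zero
  intro j _
  apply Finset.sum_eq_zero
  intro x _
  simp [hc]

end Var

section Tree

/-- Restrict a tree by fixing coordinate `i` to value `b`: every node querying `i`
is replaced by its `b`-child. -/
def fixTree {L : Type} : DTree n L → Fin n → Bool → DTree n L
  | .leaf l, _, _ => .leaf l
  | .node j t0 t1, i, b =>
      if j = i then (if b then fixTree t1 i b else fixTree t0 i b)
      else .node j (fixTree t0 i b) (fixTree t1 i b)

lemma depth_fixTree {L : Type} : ∀ (t : DTree n L) (i : Fin n) (b : Bool),
    (fixTree t i b).depth ≤ t.depth := by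
  intro t i b
  induction t with
  | leaf l => exact le_refl _
  | node j t0 t1 ih0 ih1 =>
    show (fixTree (.node j t0 t1) i b).depth ≤ max t0.depth t1.depth + 1
    rw [fixTree]
    by_cases hj : j = i
    · rw [if_pos hj]
      cases b
      · simp only [Bool.false_eq_true, if_false]
        omega
      · simp only [if_true]
        omega
    · rw [if_neg hj]
      show max (fixTree t0 i b).depth (fixTree t1 i b).depth + 1 ≤ max t0.depth t1.depth + 1
      omega

lemma eval_fixTree {L : Type} : ∀ (t : DTree n L) (i : Fin n) (b : Bool) (x : Fin n → Bool),
    (fixTree t i b).eval x = t.eval (Function.update x i b) := by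
  intro t i b
  induction t with
  | leaf l => intro x; rfl
  | node j t0 t1 ih0 ih1 =>
    intro x
    rw [fixTree]
    by_cases hj : j = i
    · subst hj
      rw [if_pos rfl]
      show _ = if Function.update x j b j then t1.eval (Function.update x j b)
        else t0.eval (Function.update x j b)
      rw [Function.update_self]
      cases b
      · simp only [Bool.false_eq_true, if_false]
        exact ih0 x
      · simp only [if_true]
        exact ih1 x
    · rw [if_neg hj]
      show (if x j then (fixTree t1 i b).eval x else (fixTree t0 i b).eval x) =
        if Function.update x i b j then t1.eval (Function.update x i b)
          else t0.eval (Function.update x i b)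
      rw [Function.update_of_ne hj]
      cases hxj : x j
      · simp only [Bool.false_eq_true, if_false]
        exact ih0 x
      · simp only [if_true]
        exact ih1 x

end Tree

lemma main_ind {p : Fin n → ℝ} (hp : ∀ i, 0 ≤ p i ∧ p i ≤ 1) :
    ∀ (d : ℕ) (T : DTree n Bool) (f : (Fin n → Bool) → Bool),
      T.depth ≤ d → (∀ x, T.eval x = f x) → totalInf p f ≤ (d : ℝ) * varOf p f := by
  intro d
  induction d with
  | zero =>
    intro T f hd hT
    match T with
    | .leaf b =>
      have hc : ∀ x, f x = b := fun x => (hT x).symm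
      rw [totalInf_const b hc]
      simp
    | .node i t0 t1 =>
      exact absurd hd (by show ¬(max _ _ + 1 ≤ 0); omega)
  | succ d ih =>
    intro T f hd hT
    match T with
    | .leaf b =>
      have hc : ∀ x, f x = b := fun x => (hT x).symm
      rw [totalInf_const b hc]
      exact mul_nonneg (by positivity) (varOf_nonneg hp f)
    | .node i t0 t1 =>
      have hd' : max t0.depth t1.depth + 1 ≤ d + 1 := hd
      set f1 : (Fin n → Bool) → Bool := fun x => f (Function.update x i true) with hf1
      set f0 : (Fin n → Bool) → Bool := fun x => f (Function.update x i false) with hf0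
      have h1 : ∀ x b, f1 (Function.update x i b) = f1 x := by
        intro x b
        simp only [hf1, Function.update_idem]
      have h0 : ∀ x b, f0 (Function.update x i b) = f0 x := by
        intro x b
        simp only [hf0, Function.update_idem]
      have hsplit : ∀ x, f x = if x i then f1 x else f0 x := by
        intro x
        cases hxi : x i
        · simp only [Bool.false_eq_true, if_false, hf0]
          conv_lhs => rw [← Function.update_eq_self i x, hxi]
        · simp only [if_true, hf1]
          conv_lhs => rw [← Function.update_eq_self i x, hxi]
      have hcomp1 : ∀ x, (fixTree t1 i true).eval x = f1 x := by
        intro x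
        rw [eval_fixTree, hf1]
        have := hT (Function.update x i true)
        rw [show (DTree.node i t0 t1).eval (Function.update x i true) =
            t1.eval (Function.update x i true) from by
          show (if Function.update x i true i then _ else _) = _
          rw [Function.update_self]
          simp] at this
        exact this
      have hcomp0 : ∀ x, (fixTree t0 i false).eval x = f0 x := by
        intro x
        rw [eval_fixTree, hf0]
        have := hT (Function.update x i false)
        rw [show (DTree.node i t0 t1).eval (Function.update x i false) =
            t0.eval (Function.update x i false) from by
          show (if Function.update x i false i then _ else _) = _
          rw [Function.update_self]
          simp] at this
        exact this
      have ih1 := ih (fixTree t1 i true) f1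
        (le_trans (depth_fixTree t1 i true) (by omega)) hcomp1
      have ih0 := ih (fixTree t0 i false) f0
        (le_trans (depth_fixTree t0 i false) (by omega)) hcomp0
      have hq := (hp i).1
      have hq' := (hp i).2
      have hsplitInf := totalInf_split (p := p) h1 h0 hsplit
      have hvge := var_split_ge hp h1 h0 hsplit
      have hie := var_ge_infl hp h1 h0 hsplit
      have hd0 : (0:ℝ) ≤ (d : ℝ) := Nat.cast_nonneg d
      push_cast
      nlinarith [mul_le_mul_of_nonneg_left ih1 hq,
        mul_le_mul_of_nonneg_left ih0 (by linarith : (0:ℝ) ≤ 1 - p i),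
        mul_le_mul_of_nonneg_left hvge hd0]

end InfDepthVar

/-- If `f` is computed by a decision tree `T` under a product
distribution, then `Inf(f) ≤ D(T) · Var(f)`. -/
theorem totalInf_le_depth_mul_var {n : ℕ} (p : Fin n → ℝ)
    (hp : ∀ i, 0 ≤ p i ∧ p i ≤ 1)
    (f : (Fin n → Bool) → Bool) (T : DTree n Bool)
    (hT : ∀ x, T.eval x = f x) :
    totalInf p f ≤ (T.depth : ℝ) * varOf p f :=
  InfDepthVar.main_ind hp T.depth T f (le_refl _) hT
end

section
/- If f : {0,1}^n → {−1,+1} is computed by a decision tree T under a product distribution μ, then the total influence of f satisfies Inf(f) ≤ Δ(T), where Δ(T) is the average depth of T. -/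
open Classical

lemma eval_update_of_not_queried {n : ℕ} {L : Type} (T : DTree n L) (x : Fin n → Bool)
    (i : Fin n) (b : Bool) (h : i ∉ T.pathCoords (T.follow x)) :
    T.eval (Function.update x i b) = T.eval x := by
  induction T with
  | leaf l => rfl
  | node j t0 t1 ih0 ih1 =>
    by_cases hxj : x j = true <;>
      simp only [DTree.follow, DTree.pathCoords, hxj, if_true, if_false,
        Bool.false_eq_true, List.mem_cons, not_or] at h
    · have hij : i ≠ j := h.1
      simp [DTree.eval, Function.update_of_ne (Ne.symm hij), hxj, ih1 h.2]
    · have hij : i ≠ j := h.1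
      simp [DTree.eval, Function.update_of_ne (Ne.symm hij), hxj, ih0 h.2]

lemma length_pathCoords_follow {n : ℕ} {L : Type} (T : DTree n L) (x : Fin n → Bool) :
    (T.pathCoords (T.follow x)).length = (T.follow x).length := by
  induction T with
  | leaf l => rfl
  | node j t0 t1 ih0 ih1 =>
    by_cases hxj : x j = true <;>
      simp [DTree.follow, DTree.pathCoords, hxj, ih0, ih1]

lemma sum_over_leafAddrs {n : ℕ} {L : Type} (T : DTree n L) (x : Fin n → Bool) :
    ∀ g : List Bool → ℝ,
      ((T.leafAddrs).map (fun s => if T.follow x = s then g s else 0)).sum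
        = g (T.follow x) := by
  induction T with
  | leaf l => intro g; simp [DTree.leafAddrs, DTree.follow]
  | node j t0 t1 ih0 ih1 =>
    intro g
    by_cases hxj : x j = true <;>
      simp [DTree.leafAddrs, DTree.follow, hxj, List.sum_append, List.map_map,
        Function.comp_def, ih0, ih1]

lemma list_sum_finset_sum {α β : Type} [Fintype β] (l : List α) (F : β → α → ℝ) :
    (l.map (fun s => ∑ x : β, F x s)).sum = ∑ x : β, (l.map (F x)).sum := by
  induction l with
  | nil => simp
  | cons a t ih => simp [ih, Finset.sum_add_distrib]

lemma avgDepth_eq_sum {n : ℕ} {L : Type} (p : Fin n → ℝ) (T : DTree n L) :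
    avgDepth p T = ∑ x : Fin n → Bool, prMass p x * ((T.follow x).length : ℝ) := by
  have hmap : T.leafAddrs.map (fun s => reachLeaf p T s * (s.length : ℝ))
      = T.leafAddrs.map (fun s => ∑ x : Fin n → Bool,
          (if T.follow x = s then prMass p x * (s.length : ℝ) else 0)) := by
    apply List.map_congr_left
    intro s _
    simp only [reachLeaf, prEvent, Finset.sum_mul]
    apply Finset.sum_congr rfl
    intro x _
    split <;> simp
  rw [avgDepth, hmap, list_sum_finset_sum]
  apply Finset.sum_congr rfl
  intro x _
  exact sum_over_leafAddrs T x (fun s => prMass p x * (s.length : ℝ))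

lemma infl_le_queried {n : ℕ} (p : Fin n → ℝ) (hp : ∀ i, 0 ≤ p i ∧ p i ≤ 1)
    (i : Fin n) (f : (Fin n → Bool) → Bool) (T : DTree n Bool)
    (hT : ∀ x, T.eval x = f x) :
    infl p i f ≤ ∑ x : Fin n → Bool,
      prMass p x * (if i ∈ T.pathCoords (T.follow x) then (1 : ℝ) else 0) := by
  unfold infl
  apply Finset.sum_le_sum
  intro x _
  by_cases hm : i ∈ T.pathCoords (T.follow x)
  · simp only [hm, if_true, mul_one]
    have h0 := prMass_nonneg hp x
    have hA : (if f x ≠ f (Function.update x i true) then p i else 0) ≤ p i := by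
      split
      · exact le_refl _
      · exact (hp i).1
    have hB : (if f x ≠ f (Function.update x i false) then 1 - p i else 0) ≤ 1 - p i := by
      split
      · exact le_refl _
      · linarith [(hp i).2]
    calc prMass p x * _ ≤ prMass p x * 1 := by
          apply mul_le_mul_of_nonneg_left _ h0
          linarith
      _ = prMass p x := mul_one _
  · have hfix : ∀ b, f (Function.update x i b) = f x := by
      intro b
      rw [← hT, ← hT, eval_update_of_not_queried T x i b hm]
    simp [hm, hfix]

/-- If `f` is computed by a decision tree `T` under a product
distribution, then `Inf(f) ≤ Δ(T)`, where `Δ(T)` is the average depth of `T`. -/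
theorem totalInf_le_avgDepth {n : ℕ} (p : Fin n → ℝ)
    (hp : ∀ i, 0 ≤ p i ∧ p i ≤ 1)
    (f : (Fin n → Bool) → Bool) (T : DTree n Bool)
    (hT : ∀ x, T.eval x = f x) :
    totalInf p f ≤ avgDepth p T := by
  rw [avgDepth_eq_sum, totalInf]
  calc ∑ i, infl p i f
      ≤ ∑ i, ∑ x : Fin n → Bool,
          prMass p x * (if i ∈ T.pathCoords (T.follow x) then (1 : ℝ) else 0) :=
        Finset.sum_le_sum (fun i _ => infl_le_queried p hp i f T hT)
    _ = ∑ x : Fin n → Bool, prMass p x *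
          ∑ i, (if i ∈ T.pathCoords (T.follow x) then (1 : ℝ) else 0) := by
        rw [Finset.sum_comm]
        exact Finset.sum_congr rfl fun x _ => (Finset.mul_sum _ _ _).symm
    _ ≤ ∑ x : Fin n → Bool, prMass p x * ((T.follow x).length : ℝ) := by
        apply Finset.sum_le_sum
        intro x _
        apply mul_le_mul_of_nonneg_left _ (prMass_nonneg hp x)
        have h1 : ∑ i, (if i ∈ T.pathCoords (T.follow x) then (1 : ℝ) else 0)
            = ((T.pathCoords (T.follow x)).toFinset.card : ℝ) := by
          rw [Finset.sum_boole]
          congr 1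
          congr 1
          ext j
          simp
        rw [h1, ← length_pathCoords_follow T x]
        exact_mod_cast List.toFinset_card_le _
end

section
/- Let f : {0,1}^n → {−1,+1} be computed by a decision tree T under a product distribution μ, where no coordinate is queried more than once on any root-to-leaf path of T. Then the total influence decomposes over the internal nodes of T: Inf(f) = Σ over internal nodes v of T of p_v · Inf_{i(v)}(f_v), where i(v) is the coordinate queried at node v. -/
open Classical

/-! ### Auxiliary lemmas -/

section Aux

variable {n : ℕ} {L : Type}

lemma prMass_factor (p : Fin n → ℝ) (x : Fin n → Bool) (i : Fin n) :
    prMass p x = (if x i then p i else 1 - p i) *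
      ∏ j ∈ Finset.univ.erase i, (if x j then p j else 1 - p j) :=
  (Finset.mul_prod_erase _ _ (Finset.mem_univ i)).symm

lemma rest_update (p : Fin n → ℝ) (x : Fin n → Bool) (i : Fin n) (c : Bool) :
    (∏ j ∈ Finset.univ.erase i, (if Function.update x i c j then p j else 1 - p j))
      = ∏ j ∈ Finset.univ.erase i, (if x j then p j else 1 - p j) := by
  apply Finset.prod_congr rfl
  intro j hj
  rw [Function.update_of_ne (Finset.ne_of_mem_erase hj)]

lemma sum_flip (i : Fin n) (G : (Fin n → Bool) → ℝ)
    (hG : ∀ x c, G (Function.update x i c) = G x) :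
    (∑ x : Fin n → Bool, if x i then G x else 0)
      = ∑ x : Fin n → Bool, if x i then 0 else G x := by
  have hinv : Function.Involutive
      (fun x : Fin n → Bool => Function.update x i (!x i)) := by
    intro x
    simp [Function.update_idem]
  rw [← Equiv.sum_comp hinv.toPerm
    (fun x : Fin n → Bool => if x i then 0 else G x)]
  apply Finset.sum_congr rfl
  intro x _
  simp only [Function.Involutive.coe_toPerm]
  by_cases h : x i
  · simp [h, hG]
  · simp [h, hG]

lemma sum_cond (p : Fin n → ℝ) (i : Fin n) (b : Bool) (G : (Fin n → Bool) → ℝ)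
    (hG : ∀ x c, G (Function.update x i c) = G x) :
    (∑ x : Fin n → Bool, if x i = b then prMass p x * G x else 0)
      = (if b then p i else 1 - p i) * ∑ x : Fin n → Bool, prMass p x * G x := by
  set R : (Fin n → Bool) → ℝ := fun x =>
    (∏ j ∈ Finset.univ.erase i, (if x j then p j else 1 - p j)) * G x with hR
  have hRind : ∀ x c, R (Function.update x i c) = R x := by
    intro x c
    simp only [hR]
    rw [rest_update, hG]
  have hmass : ∀ x, prMass p x * G x = (if x i then p i else 1 - p i) * R x := by
    intro x
    rw [prMass_factor p x i, hR]
    ring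
  have hsplit : (∑ x : Fin n → Bool, prMass p x * G x)
      = p i * (∑ x : Fin n → Bool, if x i then R x else 0)
        + (1 - p i) * (∑ x : Fin n → Bool, if x i then 0 else R x) := by
    rw [Finset.mul_sum, Finset.mul_sum, ← Finset.sum_add_distrib]
    apply Finset.sum_congr rfl
    intro x _
    rw [hmass]
    by_cases h : x i <;> simp [h]
  have hflip := sum_flip i R hRind
  cases b
  · have h1 : (∑ x : Fin n → Bool, if x i = false then prMass p x * G x else 0)
        = (1 - p i) * ∑ x : Fin n → Bool, if x i then 0 else R x := by
      rw [Finset.mul_sum]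
      apply Finset.sum_congr rfl
      intro x _
      by_cases h : x i <;> simp [h, hmass x]
    rw [h1, hsplit, hflip]
    simp only [Bool.false_eq_true, if_false]
    ring
  · have h1 : (∑ x : Fin n → Bool, if x i = true then prMass p x * G x else 0)
        = p i * ∑ x : Fin n → Bool, if x i then R x else 0 := by
      rw [Finset.mul_sum]
      apply Finset.sum_congr rfl
      intro x _
      by_cases h : x i <;> simp [h, hmass x]
    rw [h1, hsplit, hflip]
    simp only [if_true]
    ring

lemma sum_prMass (p : Fin n → ℝ) : ∑ x : Fin n → Bool, prMass p x = 1 := by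
  have h := Finset.prod_univ_sum (fun _ : Fin n => (Finset.univ : Finset Bool))
      (fun i b => if b then p i else 1 - p i)
  rw [Fintype.piFinset_univ] at h
  simp only [prMass]
  rw [← h]
  have h2 : ∀ i : Fin n, (∑ b : Bool, if b then p i else 1 - p i) = 1 := by
    intro i
    rw [Fintype.sum_bool]
    ring_nf
    simp
  simp [h2]

lemma snd_internals_node (j : Fin n) (t0 t1 : DTree n L) :
    ((DTree.node j t0 t1).internals).map Prod.snd
      = j :: ((t0.internals).map Prod.snd ++ (t1.internals).map Prod.snd) := by
  simp [DTree.internals, List.map_map, Function.comp_def]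

lemma eval_update (t : DTree n L) (i : Fin n)
    (hi : i ∉ (t.internals).map Prod.snd) (x : Fin n → Bool) (b : Bool) :
    t.eval (Function.update x i b) = t.eval x := by
  induction t generalizing x with
  | leaf l => rfl
  | node j t0 t1 ih0 ih1 =>
    rw [snd_internals_node] at hi
    simp only [List.mem_cons, List.mem_append] at hi
    push_neg at hi
    obtain ⟨hij, h0, h1⟩ := hi
    simp only [DTree.eval]
    rw [Function.update_of_ne (Ne.symm hij)]
    by_cases hx : x j
    · simp [hx, ih1 h1]
    · simp [hx, ih0 h0]

lemma follow_update (t : DTree n L) (i : Fin n)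
    (hi : i ∉ (t.internals).map Prod.snd) (x : Fin n → Bool) (b : Bool) :
    t.follow (Function.update x i b) = t.follow x := by
  induction t generalizing x with
  | leaf l => rfl
  | node j t0 t1 ih0 ih1 =>
    rw [snd_internals_node] at hi
    simp only [List.mem_cons, List.mem_append] at hi
    push_neg at hi
    obtain ⟨hij, h0, h1⟩ := hi
    simp only [DTree.follow]
    rw [Function.update_of_ne (Ne.symm hij)]
    by_cases hx : x j
    · simp [hx, ih1 h1]
    · simp [hx, ih0 h0]

lemma pathSubst_update (t : DTree n L) (i : Fin n)
    (hi : i ∉ (t.internals).map Prod.snd) (s : List Bool) (x : Fin n → Bool) (b : Bool) :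
    t.pathSubst s (Function.update x i b) = Function.update (t.pathSubst s x) i b := by
  induction t generalizing s x with
  | leaf l => rfl
  | node j t0 t1 ih0 ih1 =>
    rw [snd_internals_node] at hi
    simp only [List.mem_cons, List.mem_append] at hi
    push_neg at hi
    obtain ⟨hij, h0, h1⟩ := hi
    cases s with
    | nil => rfl
    | cons c cs =>
      simp only [DTree.pathSubst]
      cases c
      · simp only [Bool.false_eq_true, if_false]
        rw [Function.update_comm hij, ih0 h0]
      · simp only [if_true]
        rw [Function.update_comm hij, ih1 h1]

lemma infl_indep (p : Fin n → ℝ) (j : Fin n) (g : (Fin n → Bool) → Bool)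
    (hg : ∀ x c, g (Function.update x j c) = g x) : infl p j g = 0 := by
  simp [infl, hg]

lemma reachNode_nil (p : Fin n → ℝ) (T : DTree n L) : reachNode p T [] = 1 := by
  simp [reachNode, prEvent, List.nil_prefix, sum_prMass p]

lemma reachNode_cons_false (p : Fin n → ℝ) (i : Fin n) (t0 t1 : DTree n L)
    (s : List Bool) (h0 : i ∉ (t0.internals).map Prod.snd) :
    reachNode p (DTree.node i t0 t1) (false :: s) = (1 - p i) * reachNode p t0 s := by
  have key : (∑ x : Fin n → Bool,
      if x i = false then prMass p x * (if s <+: t0.follow x then (1:ℝ) else 0) else 0)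
      = (1 - p i) * ∑ x : Fin n → Bool,
          prMass p x * (if s <+: t0.follow x then (1:ℝ) else 0) := by
    simpa using sum_cond p i false (fun x => if s <+: t0.follow x then (1:ℝ) else 0)
      (by intro x c; simp [follow_update t0 i h0 x c])
  unfold reachNode prEvent
  beta_reduce
  trans (∑ x : Fin n → Bool,
      if x i = false then prMass p x * (if s <+: t0.follow x then (1:ℝ) else 0) else 0)
  · apply Finset.sum_congr rfl
    intro x _
    simp only [DTree.follow, List.cons_prefix_cons]
    by_cases hx : x i
    · simp [hx]
    · by_cases hs : s <+: t0.follow x <;> simp [hx, hs]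
  · rw [key]
    congr 1
    apply Finset.sum_congr rfl
    intro x _
    by_cases h : s <+: t0.follow x <;> simp [h]

lemma reachNode_cons_true (p : Fin n → ℝ) (i : Fin n) (t0 t1 : DTree n L)
    (s : List Bool) (h1 : i ∉ (t1.internals).map Prod.snd) :
    reachNode p (DTree.node i t0 t1) (true :: s) = p i * reachNode p t1 s := by
  have key : (∑ x : Fin n → Bool,
      if x i = true then prMass p x * (if s <+: t1.follow x then (1:ℝ) else 0) else 0)
      = p i * ∑ x : Fin n → Bool,
          prMass p x * (if s <+: t1.follow x then (1:ℝ) else 0) := by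
    simpa using sum_cond p i true (fun x => if s <+: t1.follow x then (1:ℝ) else 0)
      (by intro x c; simp [follow_update t1 i h1 x c])
  unfold reachNode prEvent
  beta_reduce
  trans (∑ x : Fin n → Bool,
      if x i = true then prMass p x * (if s <+: t1.follow x then (1:ℝ) else 0) else 0)
  · apply Finset.sum_congr rfl
    intro x _
    simp only [DTree.follow, List.cons_prefix_cons]
    by_cases hx : x i
    · by_cases hs : s <+: t1.follow x <;> simp [hx, hs]
    · simp [hx]
  · rw [key]
    congr 1
    apply Finset.sum_congr rfl
    intro x _
    by_cases h : s <+: t1.follow x <;> simp [h]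

/-- The per-point contribution to `infl`. -/
noncomputable def tj (p : Fin n → ℝ) (j : Fin n) (g : (Fin n → Bool) → Bool)
    (x : Fin n → Bool) : ℝ :=
  (if g x ≠ g (Function.update x j true) then p j else 0) +
  (if g x ≠ g (Function.update x j false) then 1 - p j else 0)

lemma infl_eq_tj (p : Fin n → ℝ) (j : Fin n) (g : (Fin n → Bool) → Bool) :
    infl p j g = ∑ x : Fin n → Bool, prMass p x * tj p j g x := rfl

lemma tj_indep (p : Fin n → ℝ) (i j : Fin n) (hij : j ≠ i)
    (g : (Fin n → Bool) → Bool) (hg : ∀ x c, g (Function.update x i c) = g x)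
    (x : Fin n → Bool) (c : Bool) :
    tj p j g (Function.update x i c) = tj p j g x := by
  have e : ∀ b : Bool, Function.update (Function.update x i c) j b
      = Function.update (Function.update x j b) i c :=
    fun b => Function.update_comm (Ne.symm hij) c b x
  simp only [tj, e, hg]

lemma infl_split (p : Fin n → ℝ) (i j : Fin n) (hij : j ≠ i)
    (f g0 g1 : (Fin n → Bool) → Bool)
    (hg0 : ∀ x c, g0 (Function.update x i c) = g0 x)
    (hg1 : ∀ x c, g1 (Function.update x i c) = g1 x)
    (hf : ∀ x, f x = if x i then g1 x else g0 x) :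
    infl p j f = p i * infl p j g1 + (1 - p i) * infl p j g0 := by
  have hupd : ∀ (x : Fin n → Bool) (c : Bool), Function.update x j c i = x i :=
    fun x c => Function.update_of_ne (Ne.symm hij) c x
  have hfg1 : ∀ x, x i = true → tj p j f x = tj p j g1 x := by
    intro x hx
    simp only [tj, hf, hupd, hx, if_true]
  have hfg0 : ∀ x, x i = false → tj p j f x = tj p j g0 x := by
    intro x hx
    simp only [tj, hf, hupd, hx, Bool.false_eq_true, if_false]
  have hsplit : infl p j f
      = (∑ x : Fin n → Bool, if x i = true then prMass p x * tj p j g1 x else 0)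
        + (∑ x : Fin n → Bool, if x i = false then prMass p x * tj p j g0 x else 0) := by
    rw [infl_eq_tj, ← Finset.sum_add_distrib]
    apply Finset.sum_congr rfl
    intro x _
    by_cases hx : x i
    · simp [hx, hfg1 x hx]
    · simp [hx, hfg0 x (by simpa using hx)]
  rw [hsplit,
    sum_cond p i true (tj p j g1) (tj_indep p i j hij g1 hg1),
    sum_cond p i false (tj p j g0) (tj_indep p i j hij g0 hg0),
    ← infl_eq_tj, ← infl_eq_tj]
  simp

lemma list_sum_map_mul {α : Type*} (a : ℝ) (l : List α) (f : α → ℝ) :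
    (l.map fun v => a * f v).sum = a * (l.map f).sum := by
  induction l with
  | nil => simp
  | cons h t ih => simp [ih]; ring

end Aux

/-- If `f` is computed by a decision tree `T` in which no coordinate is
queried more than once on any root-to-leaf path, then the total influence decomposes over
the internal nodes: `Inf(f) = Σ_{internal v} p_v · Inf_{i(v)}(f_v)`. -/
theorem totalInf_eq_sum_internals {n : ℕ} (p : Fin n → ℝ)
    (hp : ∀ i, 0 ≤ p i ∧ p i ≤ 1)
    (f : (Fin n → Bool) → Bool) (T : DTree n Bool)
    (hT : ∀ x, T.eval x = f x) (hnr : T.noRepeat) :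
    totalInf p f =
      ((T.internals).map
        (fun vi => reachNode p T vi.1 * infl p vi.2 (subFun f T vi.1))).sum := by
  clear hp
  induction T generalizing f with
  | leaf b =>
    have hconst : ∀ (j : Fin n) (x : Fin n → Bool) (c : Bool),
        f (Function.update x j c) = f x := by
      intro j x c
      rw [← hT, ← hT]
      rfl
    have : (DTree.leaf b : DTree n Bool).internals = [] := rfl
    rw [this]
    simp only [List.map_nil, List.sum_nil]
    exact Finset.sum_eq_zero fun j _ => infl_indep p j f (fun x c => hconst j x c)
  | node i t0 t1 ih0 ih1 =>
    obtain ⟨hi0, hi1, hr0, hr1⟩ := hnr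
    set g0 : (Fin n → Bool) → Bool := fun x => f (Function.update x i false) with hg0def
    set g1 : (Fin n → Bool) → Bool := fun x => f (Function.update x i true) with hg1def
    have hg0 : ∀ x c, g0 (Function.update x i c) = g0 x := by
      intro x c
      simp only [hg0def, Function.update_idem]
    have hg1 : ∀ x c, g1 (Function.update x i c) = g1 x := by
      intro x c
      simp only [hg1def, Function.update_idem]
    have hval0 : ∀ x, DTree.eval t0 x = g0 x := by
      intro x
      simp only [hg0def]
      rw [← hT]
      show DTree.eval t0 x = DTree.eval (DTree.node i t0 t1) (Function.update x i false)
      simp only [DTree.eval, Function.update_self, Bool.false_eq_true, if_false]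
      exact (eval_update t0 i hi0 x false).symm
    have hval1 : ∀ x, DTree.eval t1 x = g1 x := by
      intro x
      simp only [hg1def]
      rw [← hT]
      show DTree.eval t1 x = DTree.eval (DTree.node i t0 t1) (Function.update x i true)
      simp only [DTree.eval, Function.update_self, if_true]
      exact (eval_update t1 i hi1 x true).symm
    have hf : ∀ x, f x = if x i then g1 x else g0 x := by
      intro x
      rw [← hT x]
      show (if x i then DTree.eval t1 x else DTree.eval t0 x) = _
      by_cases hx : x i
      · simp [hx, hval1 x]
      · simp [hx, hval0 x]
    have ihA := ih0 g0 hval0 hr0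
    have ihB := ih1 g1 hval1 hr1
    -- LHS decomposition
    have hLHS : totalInf p f
        = infl p i f + (p i * totalInf p g1 + (1 - p i) * totalInf p g0) := by
      unfold totalInf
      rw [← Finset.add_sum_erase _ _ (Finset.mem_univ i)]
      congr 1
      have h1 : (∑ j ∈ Finset.univ.erase i, infl p j f)
          = ∑ j ∈ Finset.univ.erase i,
              (p i * infl p j g1 + (1 - p i) * infl p j g0) := by
        apply Finset.sum_congr rfl
        intro j hj
        exact infl_split p i j (Finset.ne_of_mem_erase hj) f g0 g1 hg0 hg1 hf
      have e1 : (∑ j ∈ Finset.univ.erase i, infl p j g1) = ∑ j, infl p j g1 := by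
        rw [← Finset.add_sum_erase _ _ (Finset.mem_univ i),
          infl_indep p i g1 hg1, zero_add]
      have e0 : (∑ j ∈ Finset.univ.erase i, infl p j g0) = ∑ j, infl p j g0 := by
        rw [← Finset.add_sum_erase _ _ (Finset.mem_univ i),
          infl_indep p i g0 hg0, zero_add]
      rw [h1, Finset.sum_add_distrib, ← Finset.mul_sum, ← Finset.mul_sum, e1, e0]
    -- subfunction identities
    have hsub0 : ∀ s : List Bool,
        subFun f (DTree.node i t0 t1) (false :: s) = subFun g0 t0 s := by
      intro s
      funext x
      show f (DTree.pathSubst (DTree.node i t0 t1) (false :: s) x) = _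
      simp only [DTree.pathSubst, Bool.false_eq_true, if_false]
      rw [pathSubst_update t0 i hi0 s x false]
      rfl
    have hsub1 : ∀ s : List Bool,
        subFun f (DTree.node i t0 t1) (true :: s) = subFun g1 t1 s := by
      intro s
      funext x
      show f (DTree.pathSubst (DTree.node i t0 t1) (true :: s) x) = _
      simp only [DTree.pathSubst, if_true]
      rw [pathSubst_update t1 i hi1 s x true]
      rfl
    have hsubnil : subFun f (DTree.node i t0 t1) [] = f := by
      funext x
      rfl
    -- assemble the RHS
    show _ = (((DTree.node i t0 t1).internals).map _).sum
    simp only [DTree.internals, List.map_cons, List.map_append, List.sum_cons,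
      List.sum_append, List.map_map, Function.comp_def]
    have hF0 : (fun vj : List Bool × Fin n =>
        reachNode p (DTree.node i t0 t1) (false :: vj.1) *
          infl p vj.2 (subFun f (DTree.node i t0 t1) (false :: vj.1)))
        = fun vj : List Bool × Fin n =>
            (1 - p i) * (reachNode p t0 vj.1 * infl p vj.2 (subFun g0 t0 vj.1)) := by
      funext vj
      rw [reachNode_cons_false p i t0 t1 vj.1 hi0, hsub0]
      ring
    have hF1 : (fun vj : List Bool × Fin n =>
        reachNode p (DTree.node i t0 t1) (true :: vj.1) *
          infl p vj.2 (subFun f (DTree.node i t0 t1) (true :: vj.1)))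
        = fun vj : List Bool × Fin n =>
            p i * (reachNode p t1 vj.1 * infl p vj.2 (subFun g1 t1 vj.1)) := by
      funext vj
      rw [reachNode_cons_true p i t0 t1 vj.1 hi1, hsub1]
      ring
    rw [hF0, hF1, list_sum_map_mul, list_sum_map_mul, ← ihA, ← ihB,
      reachNode_nil, hsubnil, one_mul, hLHS]
    ring
end

section
/- Let D ≥ 1, Δ ≥ 1 and ε > 0 be real numbers, and let (C_j)_{j≥1} be a nonincreasing sequence of nonnegative real numbers such that C_1 ≤ Δ and C_{j+1} ≤ C_j·(1 − 1/(j·D·Δ)) for every j ≥ 1 with C_j > ε·D. Then C_{t+1} ≤ ε·D for every integer t ≥ max((Δ/(ε·D))^{D·Δ}, 1); moreover C_{t+1} ≤ Δ·t^{−1/(D·Δ)} for every integer t ≥ 1 for which C_1, …, C_t all exceed ε·D. -/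
open Classical

/-! The recurrence unrolls to `C_{t+1} ≤ Δ · ∏_{j ≤ t} (1 - α/j)` with `α = 1/(D·Δ)`; bounding
each factor by `exp (-α/j)` and the harmonic number `H_t` from below by `log t` gives
`C_{t+1} ≤ Δ · t^{-α}`, which drops to `ε·D` once `t^α ≥ Δ/(ε·D)`. -/

open Finset Real

lemma le_mul_prod_Ico_of_succ_le_mul {C r : ℕ → ℝ} {m n : ℕ} (hmn : m ≤ n)
    (hr : ∀ j ∈ Ico m n, 0 ≤ r j) (hC : ∀ j ∈ Ico m n, C (j + 1) ≤ C j * r j) :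
    C n ≤ C m * ∏ j ∈ Ico m n, r j := by
  induction n, hmn using Nat.le_induction with
  | base => simp
  | succ n hmn ih =>
    have hsub : Ico m n ⊆ Ico m (n + 1) := Ico_subset_Ico_right n.le_succ
    have hn : n ∈ Ico m (n + 1) := mem_Ico.mpr ⟨hmn, n.lt_succ_self⟩
    rw [prod_Ico_succ_top hmn, ← mul_assoc]
    calc C (n + 1) ≤ C n * r n := hC n hn
      _ ≤ (C m * ∏ j ∈ Ico m n, r j) * r n :=
        mul_le_mul_of_nonneg_right (ih (fun j hj => hr j (hsub hj)) (fun j hj => hC j (hsub hj)))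
          (hr n hn)

lemma one_sub_div_nonneg_of_le_one {α : ℝ} (hα : α ≤ 1) {j : ℕ} (hj : 1 ≤ j) :
    0 ≤ 1 - α / j := by
  have hj' : (1 : ℝ) ≤ j := by exact_mod_cast hj
  rw [sub_nonneg, div_le_one (by linarith)]
  linarith

lemma prod_Icc_one_sub_div_le_rpow_neg {α : ℝ} (hα0 : 0 ≤ α) (hα1 : α ≤ 1) {t : ℕ}
    (ht : t ≠ 0) : ∏ j ∈ Icc 1 t, (1 - α / j) ≤ (t : ℝ) ^ (-α) := by
  have htpos : (0 : ℝ) < t := by positivity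
  have hlog : log t ≤ harmonic t := by
    have := log_add_one_le_harmonic t
    push_cast at this
    exact (log_le_log htpos (by linarith)).trans this
  calc ∏ j ∈ Icc 1 t, (1 - α / j)
      ≤ ∏ j ∈ Icc 1 t, exp (-(α / j)) :=
        prod_le_prod (fun j hj => one_sub_div_nonneg_of_le_one hα1 (mem_Icc.mp hj).1)
          (fun j _ => by linarith [add_one_le_exp (-(α / j))])
    _ = exp (-(α * harmonic t)) := by
        rw [← exp_sum, harmonic_eq_sum_Icc]
        push_cast
        rw [mul_sum, ← sum_neg_distrib]
        simp only [div_eq_mul_inv]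
    _ ≤ exp (-(α * log t)) := by gcongr
    _ = (t : ℝ) ^ (-α) := by rw [rpow_def_of_pos htpos]; ring_nf

lemma mul_rpow_neg_one_div_le_of_div_rpow_le {a b p x : ℝ} (ha : 0 ≤ a) (hb : 0 < b) (hp : 0 < p)
    (hx : (a / b) ^ p ≤ x) : a * x ^ (-(1 / p)) ≤ b := by
  have hab : 0 ≤ a / b := by positivity
  have hx0 : 0 ≤ x := (rpow_nonneg hab p).trans hx
  have hroot : a / b ≤ x ^ (1 / p) := by
    calc a / b = ((a / b) ^ p) ^ (1 / p) := by rw [← rpow_mul hab, mul_one_div_cancel hp.ne', rpow_one]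
      _ ≤ x ^ (1 / p) := rpow_le_rpow (rpow_nonneg hab p) hx (by positivity)
  rw [rpow_neg hx0, ← div_eq_mul_inv]
  exact div_le_of_le_mul₀ (rpow_nonneg hx0 _) hb.le (by rwa [div_le_iff₀ hb, mul_comm] at hroot)

theorem phase1_recurrence_general (D Δ ε : ℝ) (hD : 1 ≤ D) (hΔ : 1 ≤ Δ) (hε : 0 < ε)
    (C : ℕ → ℝ) (hanti : ∀ j, C (j + 1) ≤ C j)
    (h1 : C 1 ≤ Δ)
    (hrec : ∀ j : ℕ, 1 ≤ j → ε * D < C j →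
      C (j + 1) ≤ C j * (1 - 1 / ((j : ℝ) * D * Δ))) :
    (∀ t : ℕ, max ((Δ / (ε * D)) ^ (D * Δ)) 1 ≤ (t : ℝ) → C (t + 1) ≤ ε * D) ∧
    (∀ t : ℕ, 1 ≤ t → (∀ j : ℕ, 1 ≤ j → j ≤ t → ε * D < C j) →
      C (t + 1) ≤ Δ * (t : ℝ) ^ (-(1 / (D * Δ)))) := by
  have hDΔ : 1 ≤ D * Δ := one_le_mul_of_one_le_of_one_le hD hΔ
  set α := 1 / (D * Δ) with hα
  have hα0 : 0 ≤ α := by positivity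
  have hα1 : α ≤ 1 := by rw [hα, div_le_one (by positivity)]; exact hDΔ
  have decay : ∀ t : ℕ, 1 ≤ t → (∀ j : ℕ, 1 ≤ j → j ≤ t → ε * D < C j) →
      C (t + 1) ≤ Δ * (t : ℝ) ^ (-α) := by
    intro t ht hbig
    have hstep : ∀ j ∈ Ico 1 (t + 1), C (j + 1) ≤ C j * (1 - α / j) := fun j hj => by
      obtain ⟨hj1, hjt⟩ := mem_Ico.mp hj
      convert hrec j hj1 (hbig j hj1 (by omega)) using 3
      rw [hα]; ring
    have hnonneg : ∀ j ∈ Ico 1 (t + 1), 0 ≤ 1 - α / j :=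
      fun j hj => one_sub_div_nonneg_of_le_one hα1 (mem_Ico.mp hj).1
    have hunrolled := le_mul_prod_Ico_of_succ_le_mul (by omega) hnonneg hstep
    rw [Ico_add_one_right_eq_Icc] at hunrolled hnonneg
    calc C (t + 1) ≤ C 1 * ∏ j ∈ Icc 1 t, (1 - α / j) := hunrolled
      _ ≤ Δ * ∏ j ∈ Icc 1 t, (1 - α / j) := mul_le_mul_of_nonneg_right h1 (prod_nonneg hnonneg)
      _ ≤ Δ * (t : ℝ) ^ (-α) := mul_le_mul_of_nonneg_left
          (prod_Icc_one_sub_div_le_rpow_neg hα0 hα1 (by omega)) (by linarith)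
  refine ⟨fun t ht => ?_, decay⟩
  have ht1 : 1 ≤ t := by exact_mod_cast (le_max_right _ _).trans ht
  by_contra! hbig
  have hall : ∀ j : ℕ, 1 ≤ j → j ≤ t → ε * D < C j :=
    fun j _ hjt => hbig.trans_le (antitone_nat_of_succ_le hanti (by omega))
  have hsmall : Δ * (t : ℝ) ^ (-α) ≤ ε * D :=
    mul_rpow_neg_one_div_le_of_div_rpow_le (by linarith) (by positivity) (by positivity)
      ((le_max_left _ _).trans ht)
  exact hbig.not_ge ((decay t ht1 hall).trans hsmall)

/-- **Phase 1 recurrence.** Let `D, Δ ≥ 1`, `ε > 0`, and let `(C_j)_{j≥1}`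
be nonincreasing and nonnegative with `C_1 ≤ Δ` and
`C_{j+1} ≤ C_j·(1 − 1/(j·D·Δ))` whenever `C_j > ε·D`. Then `C_{t+1} ≤ ε·D` for every
integer `t ≥ max((Δ/(ε·D))^{D·Δ}, 1)`, and moreover `C_{t+1} ≤ Δ·t^{−1/(D·Δ)}` for every
integer `t ≥ 1` such that `C_1, …, C_t` all exceed `ε·D`. -/
theorem phase1_recurrence (D Δ ε : ℝ) (hD : 1 ≤ D) (hΔ : 1 ≤ Δ) (hε : 0 < ε)
    (C : ℕ → ℝ) (hnonneg : ∀ j, 0 ≤ C j) (hanti : ∀ j, C (j + 1) ≤ C j)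
    (h1 : C 1 ≤ Δ)
    (hrec : ∀ j : ℕ, 1 ≤ j → ε * D < C j →
      C (j + 1) ≤ C j * (1 - 1 / ((j : ℝ) * D * Δ))) :
    (∀ t : ℕ, max ((Δ / (ε * D)) ^ (D * Δ)) 1 ≤ (t : ℝ) → C (t + 1) ≤ ε * D) ∧
    (∀ t : ℕ, 1 ≤ t → (∀ j : ℕ, 1 ≤ j → j ≤ t → ε * D < C j) →
      C (t + 1) ≤ Δ * (t : ℝ) ^ (-(1 / (D * Δ)))) :=
  phase1_recurrence_general D Δ ε hD hΔ hε C hanti h1 hrec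
end

section
/- Let D ≥ 1, Δ ≥ 1 and ε > 0 be real numbers, let J_1 ≥ 1 be an integer, and let (C_j)_{j≥1} be a nonincreasing sequence of nonnegative real numbers such that C_{J_1+1} ≤ ε·D and C_{j+1} ≤ C_j − ε/(j·Δ) for every j ≥ J_1 with C_j > ε. Then there exists an integer J ≤ J_1·e^{Δ·D} with C_{J+1} ≤ ε. -/
open Classical

/-!
Suppose `C (J + 1) > ε` for every `J ≤ N := ⌊J₁ e^{ΔD}⌋`. Then the recurrence applies at every
step from `J₁ + 1` to `N`, so `C (N + 1)` lies below `C (J₁ + 1) ≤ εD` by at least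
`(ε/Δ) ∑_{j=J₁+1}^{N} 1/j ≥ (ε/Δ) log ((N + 1)/(J₁ + 1)) ≥ (ε/Δ)(ΔD - 1)`, the last step because
`J₁ + 1 ≤ e J₁`. Hence `C (N + 1) ≤ ε/Δ ≤ ε`, a contradiction.
-/

open Finset Real

theorem le_sub_sum_of_le_sub {u d : ℕ → ℝ} {m k : ℕ}
    (h : ∀ i < k, u (m + i + 1) ≤ u (m + i) - d (m + i)) :
    u (m + k) ≤ u m - ∑ i ∈ range k, d (m + i) := by
  have hsum : ∑ i ∈ range k, d (m + i) ≤ ∑ i ∈ range k, (u (m + i) - u (m + (i + 1))) :=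
    sum_le_sum fun i hi => by rw [← add_assoc]; linarith [h i (mem_range.mp hi)]
  rw [sum_range_sub' (fun i => u (m + i)), add_zero] at hsum
  linarith

theorem log_add_div_le_sum_inv {a : ℝ} (ha : 0 < a) (k : ℕ) :
    log ((a + k) / a) ≤ ∑ i ∈ range k, 1 / (a + i) := by
  induction k with
  | zero => simp [ha.ne']
  | succ k ih =>
    have hak : 0 < a + k := by positivity
    have hstep : log ((a + (k + 1)) / (a + k)) ≤ 1 / (a + k) := by
      calc log ((a + (k + 1)) / (a + k)) ≤ (a + (k + 1)) / (a + k) - 1 :=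
            log_le_sub_one_of_pos (by positivity)
        _ = 1 / (a + k) := by field_simp; ring
    have hsplit : (a + (k + 1)) / a = (a + k) / a * ((a + (k + 1)) / (a + k)) := by
      field_simp
    rw [sum_range_succ, Nat.cast_succ, hsplit, log_mul (by positivity) (by positivity)]
    linarith

theorem le_sub_mul_log_of_le_sub_div {u : ℕ → ℝ} {c : ℝ} (hc : 0 ≤ c) {m k : ℕ} (hm : 0 < m)
    (h : ∀ i < k, u (m + i + 1) ≤ u (m + i) - c / ((m + i : ℕ) : ℝ)) :
    u (m + k) ≤ u m - c * log (((m + k : ℕ) : ℝ) / m) := by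
  calc u (m + k) ≤ u m - ∑ i ∈ range k, c / ((m + i : ℕ) : ℝ) :=
      le_sub_sum_of_le_sub (d := fun j => c / (j : ℝ)) h
    _ = u m - c * ∑ i ∈ range k, 1 / ((m : ℝ) + i) := by
      simp only [mul_sum, mul_one_div, Nat.cast_add]
    _ ≤ u m - c * log (((m + k : ℕ) : ℝ) / m) := by
      push_cast
      gcongr
      exact log_add_div_le_sum_inv (by positivity) k

theorem sub_one_le_log_floor_mul_exp {J : ℕ} (hJ : 1 ≤ J) (t : ℝ) :
    t - 1 ≤ log ((⌊(J : ℝ) * exp t⌋₊ + 1) / (J + 1)) := by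
  have hJR : (1 : ℝ) ≤ J := by exact_mod_cast hJ
  have hsucc : (J : ℝ) + 1 ≤ J * exp 1 := by nlinarith [add_one_le_exp (1 : ℝ)]
  rw [le_log_iff_exp_le (by positivity), le_div_iff₀ (by positivity)]
  calc exp (t - 1) * (J + 1) ≤ exp (t - 1) * (J * exp 1) := by gcongr
    _ = J * exp t := by rw [mul_left_comm, ← exp_add, sub_add_cancel]
    _ ≤ ⌊(J : ℝ) * exp t⌋₊ + 1 := (Nat.lt_floor_add_one _).le

theorem phase2_recurrence_general (D Δ ε : ℝ) (hD : 1 ≤ D) (hΔ : 1 ≤ Δ) (hε : 0 < ε)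
    (J1 : ℕ) (hJ1 : 1 ≤ J1)
    (C : ℕ → ℝ)
    (hstart : C (J1 + 1) ≤ ε * D)
    (hrec : ∀ j : ℕ, J1 ≤ j → ε < C j → C (j + 1) ≤ C j - ε / ((j : ℝ) * Δ)) :
    ∃ J : ℕ, (J : ℝ) ≤ (J1 : ℝ) * Real.exp (Δ * D) ∧ C (J + 1) ≤ ε := by
  have hΔD : 1 ≤ Δ * D := one_le_mul_of_one_le_of_one_le hΔ hD
  set N := ⌊(J1 : ℝ) * exp (Δ * D)⌋₊
  by_contra! hbig
  have hJ1N : J1 ≤ N := by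
    refine Nat.le_floor (le_mul_of_one_le_right (Nat.cast_nonneg _) (one_le_exp ?_))
    linarith
  have hlarge : ∀ j ≤ N, ε < C (j + 1) := fun j hj =>
    hbig j ((Nat.cast_le.mpr hj).trans (Nat.floor_le (by positivity)))
  have hdecay : C (N + 1) ≤ C (J1 + 1) - ε / Δ * log ((N + 1 : ℕ) / (J1 + 1 : ℕ)) := by
    have := le_sub_mul_log_of_le_sub_div (u := C) (c := ε / Δ) (by positivity) (m := J1 + 1)
      (k := N - J1) (by omega) fun i hi => by
        rw [← div_mul_eq_div_div_swap]
        exact hrec _ (by omega) (by rw [add_right_comm]; exact hlarge _ (by omega))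
    rwa [show J1 + 1 + (N - J1) = N + 1 by omega] at this
  have hlog : Δ * D - 1 ≤ log ((N + 1) / (J1 + 1)) := sub_one_le_log_floor_mul_exp hJ1 (Δ * D)
  push_cast at hdecay
  have hsmall : C (N + 1) ≤ ε :=
    calc C (N + 1) ≤ ε * D - ε / Δ * (Δ * D - 1) := by
          refine hdecay.trans (sub_le_sub hstart ?_)
          exact mul_le_mul_of_nonneg_left hlog (by positivity)
      _ = ε / Δ := by field_simp; ring
      _ ≤ ε := div_le_self hε.le hΔ
  linarith [hlarge N le_rfl]

/-- **Phase 2 recurrence.** Let `D, Δ ≥ 1`, `ε > 0`, `J₁ ≥ 1`, and let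
`(C_j)_{j≥1}` be nonincreasing and nonnegative with `C_{J₁+1} ≤ ε·D` and
`C_{j+1} ≤ C_j − ε/(j·Δ)` whenever `j ≥ J₁` and `C_j > ε`. Then there is an integer
`J ≤ J₁·e^{Δ·D}` with `C_{J+1} ≤ ε`. -/
theorem phase2_recurrence (D Δ ε : ℝ) (hD : 1 ≤ D) (hΔ : 1 ≤ Δ) (hε : 0 < ε)
    (J1 : ℕ) (hJ1 : 1 ≤ J1)
    (C : ℕ → ℝ) (hnonneg : ∀ j, 0 ≤ C j) (hanti : ∀ j, C (j + 1) ≤ C j)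
    (hstart : C (J1 + 1) ≤ ε * D)
    (hrec : ∀ j : ℕ, J1 ≤ j → ε < C j → C (j + 1) ≤ C j - ε / ((j : ℝ) * Δ)) :
    ∃ J : ℕ, (J : ℝ) ≤ (J1 : ℝ) * Real.exp (Δ * D) ∧ C (J + 1) ≤ ε :=
  phase2_recurrence_general D Δ ε hD hΔ hε J1 hJ1 C hstart hrec
end
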